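/- Let F : (Fin n → Bool) → Bool be a total Boolean function, C : Set (Fin n → Bool) a constraint, and define the total function F→ by F→ x = true iff x ∉ C or F x = true (the implication from the constraint to the decision function). Let x ∈ C with F x = true. Then for every total Boolean function G : (Fin n → Bool) → Bool agreeing with F on C (i.e., G y = F y for all y ∈ C), every sufficient reason of G(x)=1 is subsumed by some sufficient reason of F→(x)=1 (both viewed as partial functions via some ∘ ·). -/

import Mathlib

/-- An instance `x : Fin n → Bool` satisfies the term `t` if `x i = b` whenever `t i = some b`. -/
def Satisfies {n : ℕ} (x : Fin n → Bool) (t : Fin n → Option Bool) : Prop :=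
  ∀ i b, t i = some b → x i = b

/-- The set of instances satisfying a term. -/
def termSet {n : ℕ} (t : Fin n → Option Bool) : Set (Fin n → Bool) :=
  {x | Satisfies x t}

/-- A term is an implicant of a partial Boolean function `f` if `f` is never `some false` on it. -/
def Implicant {n : ℕ} (f : (Fin n → Bool) → Option Bool) (t : Fin n → Option Bool) : Prop :=
  ∀ x ∈ termSet t, f x ≠ some false

/-- A prime implicant: an implicant not properly subsumed by any other implicant. -/
def PrimeImplicant {n : ℕ} (f : (Fin n → Bool) → Option Bool) (t : Fin n → Option Bool) : Prop :=
  Implicant f t ∧ ∀ s, Implicant f s → termSet t ⊆ termSet s → termSet s = termSet t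

/-- A sufficient reason of `f(x)=1`: a prime implicant of `f` satisfied by `x`. -/
def SufficientReason {n : ℕ} (f : (Fin n → Bool) → Option Bool) (x : Fin n → Bool)
    (t : Fin n → Option Bool) : Prop :=
  PrimeImplicant f t ∧ Satisfies x t

open Classical in
/-- The constrained partial function `F_C`. -/
noncomputable def constrain {n : ℕ} (F : (Fin n → Bool) → Bool) (C : Set (Fin n → Bool)) :
    (Fin n → Bool) → Option Bool :=
  fun x => if x ∈ C then some (F x) else Option.none

/-- The total completion `f̄` of a partial function: true iff `f x ≠ some false`. -/
def totalCompletion {n : ℕ} (f : (Fin n → Bool) → Option Bool) : (Fin n → Bool) → Bool :=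
  fun x => decide (f x ≠ some false)

theorem Implicant.of_offset_subset {n : ℕ} {f g : (Fin n → Bool) → Option Bool}
    {t : Fin n → Option Bool} (hfg : ∀ y, f y = some false → g y = some false)
    (ht : Implicant g t) : Implicant f t :=
  fun y hy hfy => ht y hy (hfg y hfy)

-- A prime implicant is an implicant with maximal term set, and there are finitely many term sets.
theorem Implicant.exists_primeImplicant_superset {n : ℕ} {f : (Fin n → Bool) → Option Bool}
    {t : Fin n → Option Bool} (ht : Implicant f t) :
    ∃ s, PrimeImplicant f s ∧ termSet t ⊆ termSet s := by
  obtain ⟨_, hts, ⟨s, hs, rfl⟩, hmax⟩ :=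
    Finite.exists_le_maximal (p := fun A => ∃ s, Implicant f s ∧ termSet s = A) ⟨t, ht, rfl⟩
  exact ⟨s, ⟨hs, fun s' hs' hss' => (hmax ⟨s', hs', rfl⟩ hss').antisymm hss'⟩, hts⟩

theorem stmt12_general {n : ℕ} (F : (Fin n → Bool) → Bool) (C : Set (Fin n → Bool))
    (Fimp : (Fin n → Bool) → Bool) (hFimp : ∀ y, Fimp y = true ↔ (y ∉ C ∨ F y = true))
    (x : Fin n → Bool)
    (G : (Fin n → Bool) → Bool) (hG : ∀ y ∈ C, G y = F y)
    (t : Fin n → Option Bool) (ht : SufficientReason (fun y => some (G y)) x t) :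
    ∃ s : Fin n → Option Bool,
      SufficientReason (fun y => some (Fimp y)) x s ∧ termSet t ⊆ termSet s := by
  obtain ⟨⟨htG, -⟩, hxt⟩ := ht
  have hoffset : ∀ y, some (Fimp y) = some false → some (G y) = some false := by
    intro y hy
    have hyC : y ∈ C ∧ F y = false := by
      simpa [Option.some_inj.mp hy] using hFimp y
    rw [hG y hyC.1, hyC.2]
  obtain ⟨s, hs, hts⟩ := (htG.of_offset_subset hoffset).exists_primeImplicant_superset
  exact ⟨s, ⟨hs, hts hxt⟩, hts⟩

theorem stmt12 {n : ℕ} (F : (Fin n → Bool) → Bool) (C : Set (Fin n → Bool))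
    (Fimp : (Fin n → Bool) → Bool) (hFimp : ∀ y, Fimp y = true ↔ (y ∉ C ∨ F y = true))
    (x : Fin n → Bool) (hxC : x ∈ C) (hFx : F x = true)
    (G : (Fin n → Bool) → Bool) (hG : ∀ y ∈ C, G y = F y)
    (t : Fin n → Option Bool) (ht : SufficientReason (fun y => some (G y)) x t) :
    ∃ s : Fin n → Option Bool,
      SufficientReason (fun y => some (Fimp y)) x s ∧ termSet t ⊆ termSet s :=
  stmt12_general F C Fimp hFimp x G hG t ht
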